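/- arXiv:1710.06133 — 2 statements merged into one kernel-verified Lean document; each statement's English description precedes it below -/
import Mathlib

section
/- A function p : ℝⁿ → ℝ is positively homogeneous and continuous on ℝⁿ if and only if there exist nonempty index sets I, S and a two-index family {a_{is} ∈ ℝⁿ : i∈I, s∈S} such that for every x ∈ ℝⁿ: inf_{i∈I} ⟨a_{is},x⟩ > -∞ for each s ∈ S, sup_{s∈S} ⟨a_{is},x⟩ < +∞ for each i ∈ I, and p(x) = inf_{i∈I} sup_{s∈S} ⟨a_{is},x⟩ = sup_{s∈S} inf_{i∈I} ⟨a_{is},x⟩. -/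
/-!
`⟪v, ·⟫ + K‖·‖` is the support function `x ↦ max_{a ∈ B(v, K)} ⟪a, x⟫` of a closed ball, and
`⟪w, ·⟫ - L‖·‖` is `x ↦ min_{a ∈ B(w, L)} ⟪a, x⟫`. If the first majorizes `p` and the second
minorizes it, they are ordered, which forces `‖v - w‖ ≤ K + L`: the two balls meet in a point
`a`, and `⟪a, ·⟫` lies between the two functions. By compactness of the unit sphere, `p` is the
infimum of such conic majorants and the supremum of such conic minorants, so indexing the points
`a` by (majorant, minorant) pairs gives the saddle representation.

Conversely, each `⨆ s, ⟪a i s, ·⟫` is a finite convex function, hence continuous, so `p` is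
upper semicontinuous as their infimum, and dually lower semicontinuous.
-/

open Set Metric
open scoped RealInnerProductSpace

section SaddleValue

theorem isGLB_range_of_forall_exists_lt {α ι : Type*} [LinearOrder α] {f : ι → α} {r : α}
    (hle : ∀ i, r ≤ f i) (hlt : ∀ b, r < b → ∃ i, f i < b) : IsGLB (range f) r :=
  ⟨forall_mem_range.2 hle, fun b hb => le_of_not_gt fun hrb =>
    let ⟨i, hi⟩ := hlt b hrb; (hb (mem_range_self i)).not_gt hi⟩

theorem isLUB_range_of_forall_exists_gt {α ι : Type*} [LinearOrder α] {f : ι → α} {r : α}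
    (hle : ∀ i, f i ≤ r) (hlt : ∀ b, b < r → ∃ i, b < f i) : IsLUB (range f) r :=
  isGLB_range_of_forall_exists_lt (α := αᵒᵈ) hle hlt

variable {α I S : Type*} [ConditionallyCompleteLattice α] [Nonempty I] [Nonempty S]
  {φ : I → S → α} {U : I → α} {L : S → α} {r : α}

theorem ciInf_ciSup_eq_of_isGLB_of_isLUB (hφU : ∀ i s, φ i s ≤ U i) (hLφ : ∀ i s, L s ≤ φ i s)
    (hU : IsGLB (range U) r) (hL : IsLUB (range L) r) : ⨅ i, ⨆ s, φ i s = r := by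
  have hbdd : ∀ i, BddAbove (range (φ i)) := fun i => ⟨U i, forall_mem_range.2 (hφU i)⟩
  have hr_le : ∀ i, r ≤ ⨆ s, φ i s := fun i =>
    hL.2 <| forall_mem_range.2 fun s => (hLφ i s).trans (le_ciSup (hbdd i) s)
  refine IsGLB.ciInf_eq ⟨forall_mem_range.2 hr_le, fun b hb => hU.2 ?_⟩
  exact forall_mem_range.2 fun i => (hb (mem_range_self i)).trans (ciSup_le (hφU i))

theorem ciSup_ciInf_eq_of_isGLB_of_isLUB (hφU : ∀ i s, φ i s ≤ U i) (hLφ : ∀ i s, L s ≤ φ i s)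
    (hU : IsGLB (range U) r) (hL : IsLUB (range L) r) : ⨆ s, ⨅ i, φ i s = r :=
  ciInf_ciSup_eq_of_isGLB_of_isLUB (α := αᵒᵈ) (φ := fun s i => φ i s) (fun s i => hLφ i s)
    (fun s i => hφU i s) hL hU

end SaddleValue

section ConvexSup

variable {𝕜 E β ι : Type*} [Semiring 𝕜] [PartialOrder 𝕜] [AddCommMonoid E] [SMul 𝕜 E]
  [ConditionallyCompleteLattice β] [AddCommMonoid β] [IsOrderedAddMonoid β] [Module 𝕜 β]
  [PosSMulMono 𝕜 β] [Nonempty ι] {s : Set E} {f : ι → E → β}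

theorem ConvexOn.ciSup (hf : ∀ i, ConvexOn 𝕜 s (f i))
    (hbdd : ∀ x ∈ s, BddAbove (range fun i => f i x)) : ConvexOn 𝕜 s fun x => ⨆ i, f i x := by
  refine ⟨(hf (Classical.arbitrary ι)).1, fun x hx y hy a b ha hb hab => ciSup_le fun i => ?_⟩
  exact ((hf i).2 hx hy ha hb hab).trans <| add_le_add
    (smul_le_smul_of_nonneg_left (le_ciSup (hbdd x hx) i) ha)
    (smul_le_smul_of_nonneg_left (le_ciSup (hbdd y hy) i) hb)

theorem ConcaveOn.ciInf (hf : ∀ i, ConcaveOn 𝕜 s (f i))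
    (hbdd : ∀ x ∈ s, BddBelow (range fun i => f i x)) : ConcaveOn 𝕜 s fun x => ⨅ i, f i x :=
  ConvexOn.ciSup (β := βᵒᵈ) hf hbdd

end ConvexSup

def PosHomogeneous {E : Type*} [SMul ℝ E] (f : E → ℝ) : Prop :=
  ∀ (x : E) (l : ℝ), 0 < l → f (l • x) = l * f x

namespace PosHomogeneous

section Module

variable {E : Type*} [AddCommGroup E] [Module ℝ E] {f g : E → ℝ}

theorem map_zero (hf : PosHomogeneous f) : f 0 = 0 := by
  have h := hf 0 2 two_pos
  rw [smul_zero] at h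
  linarith

theorem neg (hf : PosHomogeneous f) : PosHomogeneous fun x => -f x := fun x l hl => by
  simp only [hf x l hl, mul_neg]

theorem sub (hf : PosHomogeneous f) (hg : PosHomogeneous g) : PosHomogeneous fun x => f x - g x :=
  fun x l hl => by simp only [hf x l hl, hg x l hl, mul_sub]

theorem const_mul (hf : PosHomogeneous f) (c : ℝ) : PosHomogeneous fun x => c * f x :=
  fun x l hl => by simp only [hf x l hl, mul_left_comm]

end Module

section Normed

variable {E : Type*} [NormedAddCommGroup E] [NormedSpace ℝ E] {f g : E → ℝ}

theorem _root_.posHomogeneous_norm : PosHomogeneous fun x : E => ‖x‖ := fun x l hl => by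
  simp only [norm_smul, Real.norm_of_nonneg hl.le]

theorem le_of_forall_norm_eq_one (hf : PosHomogeneous f) (hg : PosHomogeneous g)
    (h : ∀ u, ‖u‖ = 1 → f u ≤ g u) (y : E) : f y ≤ g y := by
  rcases eq_or_ne y 0 with rfl | hy
  · rw [hf.map_zero, hg.map_zero]
  have hny : 0 < ‖y‖ := norm_pos_iff.2 hy
  rw [← smul_inv_smul₀ hny.ne' y, hf _ _ hny, hg _ _ hny]
  exact mul_le_mul_of_nonneg_left (h _ (norm_smul_inv_norm hy)) hny.le

theorem exists_le_mul [FiniteDimensional ℝ E] {h d : E → ℝ} (hh : PosHomogeneous h)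
    (hd : PosHomogeneous d) (hhc : Continuous h) (hdc : Continuous d) (hd_nonneg : ∀ y, 0 ≤ d y)
    (hneg : ∀ y ≠ 0, d y = 0 → h y < 0) : ∃ K, 0 ≤ K ∧ ∀ y, h y ≤ K * d y := by
  set A := sphere (0 : E) 1 ∩ {y | 0 ≤ h y}
  have hA : IsCompact A := (isCompact_sphere 0 1).inter_right (isClosed_le continuous_const hhc)
  have hdA : ∀ y ∈ A, 0 < d y := fun y hy => (hd_nonneg y).lt_of_ne' fun hdy =>
    (hneg y (ne_zero_of_mem_unit_sphere ⟨y, hy.1⟩) hdy).not_ge hy.2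
  obtain ⟨K, hK⟩ := hA.bddAbove_image (f := fun y => h y / d y)
    (hhc.continuousOn.div hdc.continuousOn fun y hy => (hdA y hy).ne')
  refine ⟨max K 0, le_max_right _ _, hh.le_of_forall_norm_eq_one (hd.const_mul _) fun u hu => ?_⟩
  by_cases hu_nonneg : 0 ≤ h u
  · have huA : u ∈ A := ⟨mem_sphere_zero_iff_norm.2 hu, hu_nonneg⟩
    have hratio : h u / d u ≤ K := hK (mem_image_of_mem _ huA)
    rw [div_le_iff₀ (hdA u huA)] at hratio
    exact hratio.trans (mul_le_mul_of_nonneg_right (le_max_left _ _) (hd_nonneg u))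
  · exact (lt_of_not_ge hu_nonneg).le.trans (mul_nonneg (le_max_right _ _) (hd_nonneg u))

end Normed

end PosHomogeneous

universe u

section InnerProduct

variable {E : Type u} [NormedAddCommGroup E] [InnerProductSpace ℝ E]

theorem posHomogeneous_inner (x : E) : PosHomogeneous fun y : E => ⟪x, y⟫ :=
  fun y l _ => real_inner_smul_right x y l

theorem inner_le_inner_add_mul_norm {a b : E} {r : ℝ} (h : dist a b ≤ r) (y : E) :
    ⟪a, y⟫ ≤ ⟪b, y⟫ + r * ‖y‖ := by
  have := (real_inner_le_norm (a - b) y).trans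
    (mul_le_mul_of_nonneg_right (dist_eq_norm a b ▸ h) (norm_nonneg y))
  rw [inner_sub_left] at this
  linarith

theorem inner_sub_mul_norm_le_inner {a b : E} {r : ℝ} (h : dist a b ≤ r) (y : E) :
    ⟪b, y⟫ - r * ‖y‖ ≤ ⟪a, y⟫ := by
  have := inner_le_inner_add_mul_norm (dist_comm a b ▸ h) y
  linarith

structure ConicMajorant (p : E → ℝ) where
  center : E
  radius : ℝ
  radius_nonneg : 0 ≤ radius
  le : ∀ y, p y ≤ ⟪center, y⟫ + radius * ‖y‖

structure ConicMinorant (p : E → ℝ) where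
  center : E
  radius : ℝ
  radius_nonneg : 0 ≤ radius
  ge : ∀ y, ⟪center, y⟫ - radius * ‖y‖ ≤ p y

variable {p : E → ℝ}

theorem ConicMajorant.dist_center_le (c : ConicMajorant p) (d : ConicMinorant p) :
    dist c.center d.center ≤ c.radius + d.radius := by
  set y := d.center - c.center
  have hcd := (d.ge y).trans (c.le y)
  have hy : ‖y‖ * ‖y‖ ≤ (c.radius + d.radius) * ‖y‖ := by
    rw [← real_inner_self_eq_norm_mul_norm]
    nth_rewrite 1 [inner_sub_left]
    linarith
  rw [dist_comm, dist_eq_norm]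
  rcases (norm_nonneg y).eq_or_lt with hy0 | hy0
  · rw [← hy0]; exact add_nonneg c.radius_nonneg d.radius_nonneg
  · exact le_of_mul_le_mul_right hy hy0

theorem PosHomogeneous.exists_conicMajorant_lt [FiniteDimensional ℝ E] (hp : PosHomogeneous p)
    (hc : Continuous p) {x : E} {b : ℝ} (hb : p x < b) :
    ∃ c : ConicMajorant p, ⟪c.center, x⟫ + c.radius * ‖x‖ < b := by
  rcases eq_or_ne x 0 with rfl | hx
  · obtain ⟨K, hK, hpK⟩ := hp.exists_le_mul posHomogeneous_norm hc continuous_norm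
      (fun _ => norm_nonneg _) fun y hy hy0 => absurd (norm_eq_zero.1 hy0) hy
    refine ⟨⟨0, K, hK, fun y => by simpa using hpK y⟩, ?_⟩
    simpa [hp.map_zero] using hb
  have hnx : 0 < ‖x‖ := norm_pos_iff.2 hx
  set c := (p x + b) / 2 / ‖x‖ ^ 2
  have hcx : c * ⟪x, x⟫ = (p x + b) / 2 := by
    rw [real_inner_self_eq_norm_sq, div_mul_cancel₀ _ (by positivity)]
  obtain ⟨K, hK, hpK⟩ := (hp.sub ((posHomogeneous_inner x).const_mul c)).exists_le_mul
    ((posHomogeneous_norm.const_mul ‖x‖).sub (posHomogeneous_inner x)) (by fun_prop) (by fun_prop)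
    (fun y => sub_nonneg.2 (real_inner_le_norm x y)) fun y hy hy0 => by
      -- equality in Cauchy–Schwarz puts `y` on the ray through `x`, where `c ⟪x, ·⟫` exceeds `p`
      obtain ⟨t, ht, rfl⟩ : ∃ t : ℝ, 0 < t ∧ t • x = y := by
        refine ⟨‖y‖ / ‖x‖, div_pos (norm_pos_iff.2 hy) hnx, ?_⟩
        rw [div_eq_inv_mul, mul_smul, inner_eq_norm_mul_iff_real.1 (sub_eq_zero.1 hy0).symm,
          inv_smul_smul₀ hnx.ne']
      simp only [hp x t ht, real_inner_smul_right]
      nlinarith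
  refine ⟨⟨(c - K) • x, K * ‖x‖, by positivity, fun y => ?_⟩, ?_⟩
  · have := hpK y
    rw [real_inner_smul_left]
    linarith
  · calc ⟪(c - K) • x, x⟫ + K * ‖x‖ * ‖x‖ = c * ⟪x, x⟫ := by
          rw [real_inner_smul_left, real_inner_self_eq_norm_mul_norm]; ring
      _ < b := by linarith

theorem PosHomogeneous.exists_conicMinorant_gt [FiniteDimensional ℝ E] (hp : PosHomogeneous p)
    (hc : Continuous p) {x : E} {b : ℝ} (hb : b < p x) :
    ∃ d : ConicMinorant p, b < ⟪d.center, x⟫ - d.radius * ‖x‖ := by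
  obtain ⟨c, hcx⟩ := hp.neg.exists_conicMajorant_lt hc.neg (b := -b) (neg_lt_neg hb)
  refine ⟨⟨-c.center, c.radius, c.radius_nonneg, fun y => ?_⟩, ?_⟩
  · have := c.le y
    rw [inner_neg_left]
    linarith
  · rw [inner_neg_left]
    linarith

structure IsSaddleRepresentation {I S : Type*} (p : E → ℝ) (a : I → S → E) : Prop where
  bddBelow : ∀ x s, BddBelow (range fun i => ⟪a i s, x⟫)
  bddAbove : ∀ x i, BddAbove (range fun s => ⟪a i s, x⟫)
  eq_ciInf_ciSup : ∀ x, p x = ⨅ i, ⨆ s, ⟪a i s, x⟫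
  eq_ciSup_ciInf : ∀ x, p x = ⨆ s, ⨅ i, ⟪a i s, x⟫

theorem PosHomogeneous.exists_isSaddleRepresentation [FiniteDimensional ℝ E]
    (hp : PosHomogeneous p) (hc : Continuous p) :
    ∃ (I S : Type u) (_ : Nonempty I) (_ : Nonempty S) (a : I → S → E),
      IsSaddleRepresentation p a := by
  have hU (x : E) :
      IsGLB (range fun c : ConicMajorant p => ⟪c.center, x⟫ + c.radius * ‖x‖) (p x) :=
    isGLB_range_of_forall_exists_lt (fun c => c.le x) fun _ => hp.exists_conicMajorant_lt hc
  have hL (x : E) :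
      IsLUB (range fun d : ConicMinorant p => ⟪d.center, x⟫ - d.radius * ‖x‖) (p x) :=
    isLUB_range_of_forall_exists_gt (fun d => d.ge x) fun _ => hp.exists_conicMinorant_gt hc
  have : Nonempty (ConicMajorant p) := range_nonempty_iff_nonempty.1 (hU 0).nonempty
  have : Nonempty (ConicMinorant p) := range_nonempty_iff_nonempty.1 (hL 0).nonempty
  have hmeet (c : ConicMajorant p) (d : ConicMinorant p) :
      ∃ a, dist c.center a ≤ c.radius ∧ dist a d.center ≤ d.radius :=
    exists_dist_le_le c.radius_nonneg d.radius_nonneg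
      (add_comm c.radius d.radius ▸ c.dist_center_le d)
  choose a hac had using hmeet
  have hup (c d) (x : E) : ⟪a c d, x⟫ ≤ ⟪c.center, x⟫ + c.radius * ‖x‖ :=
    inner_le_inner_add_mul_norm (dist_comm c.center _ ▸ hac c d) x
  have hlo (c d) (x : E) : ⟪d.center, x⟫ - d.radius * ‖x‖ ≤ ⟪a c d, x⟫ :=
    inner_sub_mul_norm_le_inner (had c d) x
  refine ⟨ConicMajorant p, ConicMinorant p, ‹_›, ‹_›, a,
    fun x d => ⟨_, forall_mem_range.2 fun c => hlo c d x⟩,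
    fun x c => ⟨_, forall_mem_range.2 fun d => hup c d x⟩, fun x => ?_, fun x => ?_⟩
  · exact (ciInf_ciSup_eq_of_isGLB_of_isLUB (hup · · x) (hlo · · x) (hU x) (hL x)).symm
  · exact (ciSup_ciInf_eq_of_isGLB_of_isLUB (hup · · x) (hlo · · x) (hU x) (hL x)).symm

namespace IsSaddleRepresentation

variable {I S : Type*} {a : I → S → E}

theorem posHomogeneous (h : IsSaddleRepresentation p a) : PosHomogeneous p := fun x l hl => by
  simp only [h.eq_ciInf_ciSup, real_inner_smul_right, ← Real.mul_iSup_of_nonneg hl.le,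
    ← Real.mul_iInf_of_nonneg hl.le]

theorem continuous [FiniteDimensional ℝ E] [Nonempty I] [Nonempty S]
    (h : IsSaddleRepresentation p a) : Continuous p := by
  have hsup_cont (i : I) : Continuous fun x => ⨆ s, ⟪a i s, x⟫ := continuousOn_univ.1 <|
    (ConvexOn.ciSup (fun s => (innerₛₗ ℝ (a i s)).convexOn convex_univ)
      fun x _ => h.bddAbove x i).continuousOn isOpen_univ
  have hinf_cont (s : S) : Continuous fun x => ⨅ i, ⟪a i s, x⟫ := continuousOn_univ.1 <|
    (ConcaveOn.ciInf (fun i => (innerₛₗ ℝ (a i s)).concaveOn convex_univ)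
      fun x _ => h.bddBelow x s).continuousOn isOpen_univ
  have hsup_bdd (x : E) : BddBelow (range fun i => ⨆ s, ⟪a i s, x⟫) := by
    obtain ⟨s⟩ := ‹Nonempty S›
    obtain ⟨m, hm⟩ := h.bddBelow x s
    exact ⟨m, forall_mem_range.2 fun i =>
      (hm (mem_range_self i)).trans (le_ciSup (h.bddAbove x i) s)⟩
  have hinf_bdd (x : E) : BddAbove (range fun s => ⨅ i, ⟪a i s, x⟫) := by
    obtain ⟨i⟩ := ‹Nonempty I›
    obtain ⟨m, hm⟩ := h.bddAbove x i
    exact ⟨m, forall_mem_range.2 fun s =>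
      (ciInf_le (h.bddBelow x s) i).trans (hm (mem_range_self s))⟩
  rw [continuous_iff_lower_upperSemicontinuous]
  constructor
  · rw [funext h.eq_ciSup_ciInf]
    exact lowerSemicontinuous_ciSup hinf_bdd fun s => (hinf_cont s).lowerSemicontinuous
  · rw [funext h.eq_ciInf_ciSup]
    exact upperSemicontinuous_ciInf hsup_bdd fun i => (hsup_cont i).upperSemicontinuous

end IsSaddleRepresentation

end InnerProduct

theorem stmt_10 {n : ℕ} (p : EuclideanSpace ℝ (Fin n) → ℝ) :
    ((∀ (x : EuclideanSpace ℝ (Fin n)) (l : ℝ), 0 < l → p (l • x) = l * p x) ∧ Continuous p)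
    ↔
    ∃ (I S : Type) (_ : Nonempty I) (_ : Nonempty S)
      (a : I → S → EuclideanSpace ℝ (Fin n)),
      (∀ (x : EuclideanSpace ℝ (Fin n)) (s : S),
        BddBelow (Set.range fun i : I => (inner ℝ (a i s) x : ℝ))) ∧
      (∀ (x : EuclideanSpace ℝ (Fin n)) (i : I),
        BddAbove (Set.range fun s : S => (inner ℝ (a i s) x : ℝ))) ∧
      (∀ x : EuclideanSpace ℝ (Fin n),
        (p x = ⨅ i : I, ⨆ s : S, (inner ℝ (a i s) x : ℝ)) ∧
        (p x = ⨆ s : S, ⨅ i : I, (inner ℝ (a i s) x : ℝ))) := by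
  constructor
  · rintro ⟨hp, hc⟩
    obtain ⟨I, S, hI, hS, a, h⟩ := PosHomogeneous.exists_isSaddleRepresentation hp hc
    exact ⟨I, S, hI, hS, a, h.bddBelow, h.bddAbove,
      fun x => ⟨h.eq_ciInf_ciSup x, h.eq_ciSup_ciInf x⟩⟩
  · rintro ⟨I, S, hI, hS, a, hbddBelow, hbddAbove, hrep⟩
    have h : IsSaddleRepresentation p a :=
      ⟨hbddBelow, hbddAbove, fun x => (hrep x).1, fun x => (hrep x).2⟩
    exact ⟨h.posHomogeneous, h.continuous⟩
end

section
/- Every difference of two polyhedral sublinear functions, p(x) = max_{s∈S} ⟨b_s,x⟩ − max_{i∈I} ⟨c_i,x⟩ with S and I finite and nonempty, admits the saddle representation p(x) = min_{i∈I} max_{s∈S} ⟨b_s − c_i, x⟩ = max_{s∈S} min_{i∈I} ⟨b_s − c_i, x⟩ for all x ∈ ℝⁿ. -/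
/-! Both identities come from moving the subtraction inside the extrema: `(⨆ s, u s) - v` is
`⨆ s, (u s - v)`, and `u - ⨆ i, v i` is `⨅ i, (u - v i)` since `u - ·` is order-reversing.
Expanding the outer maximum first gives the min-max form, the inner one first the max-min form. -/

open Set

theorem sub_ciSup {ι G : Type*} [AddCommGroup G] [ConditionallyCompleteLattice G]
    [IsOrderedAddMonoid G] [Nonempty ι] {f : ι → G} (hf : BddAbove (range f)) (a : G) :
    a - ⨆ i, f i = ⨅ i, a - f i :=
  (OrderIso.subLeft a).map_ciSup hf

theorem stmt_18 {n : ℕ} {I S : Type} [Fintype I] [Fintype S] [Nonempty I] [Nonempty S]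
    (b : S → EuclideanSpace ℝ (Fin n)) (c : I → EuclideanSpace ℝ (Fin n))
    (p : EuclideanSpace ℝ (Fin n) → ℝ)
    (hp : ∀ x : EuclideanSpace ℝ (Fin n),
      p x = (⨆ s : S, (inner ℝ (b s) x : ℝ)) - ⨆ i : I, (inner ℝ (c i) x : ℝ)) :
    ∀ x : EuclideanSpace ℝ (Fin n),
      (p x = ⨅ i : I, ⨆ s : S, (inner ℝ (b s - c i) x : ℝ)) ∧
      (p x = ⨆ s : S, ⨅ i : I, (inner ℝ (b s - c i) x : ℝ)) := by
  intro x
  simp only [inner_sub_left, hp x]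
  constructor
  · simp only [← ciSup_sub (Finite.bddAbove_range _), sub_ciSup (Finite.bddAbove_range _)]
  · simp only [← sub_ciSup (Finite.bddAbove_range _), ciSup_sub (Finite.bddAbove_range _)]
end
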